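/- Let C be an abelian category with enough injectives and A the heart category of complexes [A \to B \to C] with first map injective and exact at the middle. Then A has enough injectives: every object of A admits a monomorphism into an object of the form [A' \to I \to J] with I, J injective in C. -/

import Mathlib

open CategoryTheory Limits

namespace ARHeart

variable (C : Type*) [Category C] [Abelian C]

/-- Objects of the heart `𝒜`: complexes `[A ⟶ B ⟶ Z]` in degrees `-2, -1, 0`
with the first map a monomorphism and `Ker g = Im f`. -/
structure Obj : Type _ where
  A : C
  B : C
  Z : C
  f : A ⟶ B
  g : B ⟶ Z
  w : f ≫ g = 0
  mono : Mono f
  exact : (ShortComplex.mk f g w).Exact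

variable {C}

/-- Chain maps between heart objects. -/
@[ext]
structure Hom (V W : Obj C) where
  a : V.A ⟶ W.A
  b : V.B ⟶ W.B
  c : V.Z ⟶ W.Z
  comm₁ : V.f ≫ b = a ≫ W.f
  comm₂ : V.g ≫ c = b ≫ W.g

namespace Hom

variable {U V W : Obj C}

instance : Zero (Hom V W) := ⟨⟨0, 0, 0, by simp, by simp⟩⟩
instance : Add (Hom V W) :=
  ⟨fun φ ψ => ⟨φ.a + ψ.a, φ.b + ψ.b, φ.c + ψ.c,
    by simp [Preadditive.comp_add, Preadditive.add_comp, φ.comm₁, ψ.comm₁],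
    by simp [Preadditive.comp_add, Preadditive.add_comp, φ.comm₂, ψ.comm₂]⟩⟩
instance : Neg (Hom V W) :=
  ⟨fun φ => ⟨-φ.a, -φ.b, -φ.c,
    by simp [φ.comm₁], by simp [φ.comm₂]⟩⟩
instance : Sub (Hom V W) :=
  ⟨fun φ ψ => ⟨φ.a - ψ.a, φ.b - ψ.b, φ.c - ψ.c,
    by simp [Preadditive.comp_sub, Preadditive.sub_comp, φ.comm₁, ψ.comm₁],
    by simp [Preadditive.comp_sub, Preadditive.sub_comp, φ.comm₂, ψ.comm₂]⟩⟩
instance : SMul ℕ (Hom V W) :=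
  ⟨fun n φ => ⟨n • φ.a, n • φ.b, n • φ.c,
    by simp [φ.comm₁], by simp [φ.comm₂]⟩⟩
instance : SMul ℤ (Hom V W) :=
  ⟨fun n φ => ⟨n • φ.a, n • φ.b, n • φ.c,
    by simp [φ.comm₁], by simp [φ.comm₂]⟩⟩

@[simp] lemma add_a (φ ψ : Hom V W) : (φ + ψ).a = φ.a + ψ.a := rfl
@[simp] lemma add_b (φ ψ : Hom V W) : (φ + ψ).b = φ.b + ψ.b := rfl
@[simp] lemma add_c (φ ψ : Hom V W) : (φ + ψ).c = φ.c + ψ.c := rfl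
@[simp] lemma sub_a (φ ψ : Hom V W) : (φ - ψ).a = φ.a - ψ.a := rfl
@[simp] lemma sub_b (φ ψ : Hom V W) : (φ - ψ).b = φ.b - ψ.b := rfl
@[simp] lemma sub_c (φ ψ : Hom V W) : (φ - ψ).c = φ.c - ψ.c := rfl
@[simp] lemma neg_a (φ : Hom V W) : (-φ).a = -φ.a := rfl
@[simp] lemma neg_b (φ : Hom V W) : (-φ).b = -φ.b := rfl
@[simp] lemma neg_c (φ : Hom V W) : (-φ).c = -φ.c := rfl
@[simp] lemma zero_a : (0 : Hom V W).a = 0 := rfl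
@[simp] lemma zero_b : (0 : Hom V W).b = 0 := rfl
@[simp] lemma zero_c : (0 : Hom V W).c = 0 := rfl

instance : AddCommGroup (Hom V W) :=
  Function.Injective.addCommGroup
    (fun φ => (φ.a, φ.b, φ.c))
    (fun φ ψ h => by
      ext <;> simp only [Prod.mk.injEq] at h <;> tauto)
    rfl (fun _ _ => rfl) (fun _ => rfl) (fun _ _ => rfl) (fun _ _ => rfl) (fun _ _ => rfl)

/-- Identity chain map. -/
def id (V : Obj C) : Hom V V := ⟨𝟙 _, 𝟙 _, 𝟙 _, by simp, by simp⟩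

/-- Composition of chain maps. -/
def comp (φ : Hom U V) (ψ : Hom V W) : Hom U W :=
  ⟨φ.a ≫ ψ.a, φ.b ≫ ψ.b, φ.c ≫ ψ.c,
    by rw [← Category.assoc, φ.comm₁, Category.assoc, ψ.comm₁, Category.assoc],
    by rw [← Category.assoc, φ.comm₂, Category.assoc, ψ.comm₂, Category.assoc]⟩

@[simp] lemma comp_a (φ : Hom U V) (ψ : Hom V W) : (φ.comp ψ).a = φ.a ≫ ψ.a := rfl
@[simp] lemma comp_b (φ : Hom U V) (ψ : Hom V W) : (φ.comp ψ).b = φ.b ≫ ψ.b := rfl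
@[simp] lemma comp_c (φ : Hom U V) (ψ : Hom V W) : (φ.comp ψ).c = φ.c ≫ ψ.c := rfl

lemma sub_comp (φ φ' : Hom U V) (ψ : Hom V W) :
    (φ - φ').comp ψ = φ.comp ψ - φ'.comp ψ := by
  ext <;> simp [Preadditive.sub_comp]

lemma comp_sub (φ : Hom U V) (ψ ψ' : Hom V W) :
    φ.comp (ψ - ψ') = φ.comp ψ - φ.comp ψ' := by
  ext <;> simp [Preadditive.comp_sub]

lemma add_comp (φ φ' : Hom U V) (ψ : Hom V W) :
    (φ + φ').comp ψ = φ.comp ψ + φ'.comp ψ := by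
  ext <;> simp [Preadditive.add_comp]

lemma comp_add (φ : Hom U V) (ψ ψ' : Hom V W) :
    φ.comp (ψ + ψ') = φ.comp ψ + φ.comp ψ' := by
  ext <;> simp [Preadditive.comp_add]

end Hom

/-- The subgroup of chain maps homotopic to zero. -/
def nullHomotopic (V W : Obj C) : AddSubgroup (Hom V W) where
  carrier := {χ | ∃ (s₁ : V.B ⟶ W.A) (s₀ : V.Z ⟶ W.B),
    χ.a = V.f ≫ s₁ ∧ χ.b = V.g ≫ s₀ + s₁ ≫ W.f ∧ χ.c = s₀ ≫ W.g}
  add_mem' := by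
    rintro χ χ' ⟨s₁, s₀, h1, h2, h3⟩ ⟨t₁, t₀, h1', h2', h3'⟩
    exact ⟨s₁ + t₁, s₀ + t₀, by
      simp [h1, h1', Preadditive.comp_add], by
      simp only [Hom.add_b, h2, h2', Preadditive.comp_add, Preadditive.add_comp]
      abel, by simp [h3, h3', Preadditive.add_comp]⟩
  zero_mem' := ⟨0, 0, by simp, by simp, by simp⟩
  neg_mem' := by
    rintro χ ⟨s₁, s₀, h1, h2, h3⟩
    exact ⟨-s₁, -s₀, by simp [h1], by simp [h2]; abel, by simp [h3]⟩

lemma comp_null {U V W : Obj C} (χ : Hom U V) (ψ : Hom V W)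
    (h : χ ∈ nullHomotopic U V) : χ.comp ψ ∈ nullHomotopic U W := by
  obtain ⟨s₁, s₀, h1, h2, h3⟩ := h
  refine ⟨s₁ ≫ ψ.a, s₀ ≫ ψ.b, ?_, ?_, ?_⟩
  · simp [h1]
  · simp only [Hom.comp_b, h2, Preadditive.add_comp, Category.assoc, ψ.comm₁]
  · simp only [Hom.comp_c, h3, Category.assoc, ψ.comm₂]

lemma null_comp {U V W : Obj C} (φ : Hom U V) (χ : Hom V W)
    (h : χ ∈ nullHomotopic V W) : φ.comp χ ∈ nullHomotopic U W := by
  obtain ⟨s₁, s₀, h1, h2, h3⟩ := h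
  refine ⟨φ.b ≫ s₁, φ.c ≫ s₀, ?_, ?_, ?_⟩
  · simp only [Hom.comp_a, h1, ← Category.assoc, φ.comm₁]
  · simp only [Hom.comp_b, h2, Preadditive.comp_add, ← Category.assoc, φ.comm₂]
  · simp [h3]

instance instCategory : Category (Obj C) where
  Hom V W := Hom V W ⧸ nullHomotopic V W
  id V := QuotientAddGroup.mk (Hom.id V)
  comp := Quotient.map₂ Hom.comp (by
    intro φ φ' hφ ψ ψ' hψ
    replace hφ := QuotientAddGroup.leftRel_apply.mp hφ
    replace hψ := QuotientAddGroup.leftRel_apply.mp hψ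
    refine QuotientAddGroup.leftRel_apply.mpr ?_
    have : -φ.comp ψ + φ'.comp ψ' = (-φ + φ').comp ψ' + φ.comp (-ψ + ψ') := by
      refine Hom.ext ?_ ?_ ?_ <;>
        simp [Hom.comp, Preadditive.add_comp, Preadditive.comp_add,
          Preadditive.neg_comp, Preadditive.comp_neg] <;> abel
    rw [this]
    exact AddSubgroup.add_mem _ (comp_null _ _ hφ) (null_comp _ _ hψ))
  id_comp := by
    rintro V W ⟨φ⟩
    exact congrArg (QuotientAddGroup.mk)
      (Hom.ext (by simp [Hom.comp, Hom.id]) (by simp [Hom.comp, Hom.id])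
        (by simp [Hom.comp, Hom.id]))
  comp_id := by
    rintro V W ⟨φ⟩
    exact congrArg (QuotientAddGroup.mk)
      (Hom.ext (by simp [Hom.comp, Hom.id]) (by simp [Hom.comp, Hom.id])
        (by simp [Hom.comp, Hom.id]))
  assoc := by
    rintro U V W X ⟨φ⟩ ⟨ψ⟩ ⟨ρ⟩
    exact congrArg (QuotientAddGroup.mk)
      (Hom.ext (by simp [Hom.comp]) (by simp [Hom.comp]) (by simp [Hom.comp]))

/-- The homotopy class of a chain map, as a morphism in the heart. -/
def mkHom {V W : Obj C} (φ : Hom V W) : V ⟶ W := QuotientAddGroup.mk φ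

lemma mkHom_surjective {V W : Obj C} : Function.Surjective (mkHom (V := V) (W := W)) :=
  fun q => Quotient.inductionOn q (fun φ => ⟨φ, rfl⟩)

@[simp] lemma mkHom_comp {U V W : Obj C} (φ : Hom U V) (ψ : Hom V W) :
    mkHom φ ≫ mkHom ψ = mkHom (φ.comp ψ) := rfl

instance homAddCommGroup (V W : Obj C) : AddCommGroup (V ⟶ W) :=
  inferInstanceAs (AddCommGroup (Hom V W ⧸ nullHomotopic V W))

lemma mkHom_add {V W : Obj C} (φ ψ : Hom V W) :
    (mkHom (φ + ψ) : V ⟶ W) = mkHom φ + mkHom ψ := rfl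

instance : Preadditive (Obj C) where
  homGroup := homAddCommGroup
  add_comp := by
    rintro U V W ⟨φ⟩ ⟨φ'⟩ ⟨ψ⟩
    show mkHom ((φ + φ').comp ψ) = mkHom ((φ.comp ψ) + (φ'.comp ψ))
    rw [Hom.add_comp]
  comp_add := by
    rintro U V W ⟨φ⟩ ⟨ψ⟩ ⟨ψ'⟩
    show mkHom (φ.comp (ψ + ψ')) = mkHom ((φ.comp ψ) + (φ.comp ψ'))
    rw [Hom.comp_add]

open ZeroObject in
/-- The object `P_X = [0 ⟶ 0 ⟶ X]`. -/
noncomputable def P (X : C) : Obj C where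
  A := 0
  B := 0
  Z := X
  f := 0
  g := 0
  w := by simp
  mono := by infer_instance
  exact := ShortComplex.exact_of_isZero_X₂ _ (isZero_zero C)

/-- The functor `P : C ⥤ 𝒜`, `X ↦ [0 ⟶ 0 ⟶ X]`. -/
noncomputable def Pfunctor : C ⥤ Obj C where
  obj := P
  map {X Y} u := mkHom ⟨0, 0, u, by simp [P]; exact zero_comp.trans zero_comp.symm, by simp [P]; exact zero_comp.symm⟩
  map_id X := congrArg QuotientAddGroup.mk
    (Hom.ext (by simp [Hom.id, P]; rfl) (by simp [Hom.id, P]; rfl) (by simp [Hom.id, P]))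
  map_comp {X Y Z} u v := congrArg QuotientAddGroup.mk
    (Hom.ext (by simp [Hom.comp]) (by simp [Hom.comp]) (by simp [Hom.comp]; rfl))

/-- The heart object `[Ker g ⟶ B ⟶ Z]` associated to a morphism `g : B ⟶ Z`. -/
noncomputable def kernelObj {B Z : C} (g : B ⟶ Z) : Obj C where
  A := kernel g
  B := B
  Z := Z
  f := kernel.ι g
  g := g
  w := kernel.condition g
  mono := inferInstance
  exact := ShortComplex.exact_of_f_is_kernel _ (kernelIsKernel g)

end ARHeart

open CategoryTheory Limits in
/-- In an abelian category, a pushout square along a monomorphism is also a pullback: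
the lifting property. -/
noncomputable def ARHeart.pushout_lift_aux {C : Type*} [Category C] [Abelian C]
    {B Z I X : C} (g : B ⟶ Z) (u : B ⟶ I) [Mono u]
    (z : X ⟶ Z) (i : X ⟶ I) (h : z ≫ pushout.inl g u = i ≫ pushout.inr g u) :
    { t : X ⟶ B // t ≫ g = z ∧ t ≫ u = i } := by
  have hm : Mono (biprod.lift g (-u)) := Preadditive.mono_of_cancel_zero _ (by
    intro P a ha
    have : a ≫ biprod.lift g (-u) ≫ biprod.snd = 0 := by rw [reassoc_of% ha, zero_comp]
    rw [biprod.lift_snd, Preadditive.comp_neg, neg_eq_zero] at this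
    exact zero_of_comp_mono u this)
  have hker := Abelian.monoIsKernelOfCokernel _
    (Abelian.BiproductToPushoutIsCokernel.isColimitBiproductToPushout g u)
  have hzero : biprod.lift z (-i) ≫ Abelian.BiproductToPushoutIsCokernel.biproductToPushout g u
      = 0 := by
    rw [biprod.lift_desc, Preadditive.neg_comp, h, add_neg_cancel]
  obtain ⟨t, ht⟩ := KernelFork.IsLimit.lift' hker (biprod.lift z (-i)) hzero
  simp only [Fork.ι_ofι] at ht
  refine ⟨t, ?_, ?_⟩
  · have := ht =≫ biprod.fst
    simpa using this
  · have := ht =≫ biprod.snd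
    simp only [Category.assoc, biprod.lift_snd, Preadditive.comp_neg, neg_inj] at this
    exact this

open CategoryTheory Limits ARHeart in
/-- if `C` has enough injectives then so does the heart `𝒜`: every object
admits a monomorphism into an object `[A' ⟶ I ⟶ J]` with `I`, `J` injective in `C`. -/
theorem stmt10 {C : Type*} [Category C] [Abelian C] [EnoughInjectives C]
    (V : ARHeart.Obj C) :
    ∃ (W : ARHeart.Obj C) (m : V ⟶ W), Injective W.B ∧ Injective W.Z ∧ Mono m := by
  -- Embed `V.B` into an injective `I`.
  let I := Injective.under V.B
  let u : V.B ⟶ I := Injective.ι V.B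
  -- Form the pushout `Q` of `V.g` along `u`, and embed it into an injective `J`.
  let Q := pushout V.g u
  let J := Injective.under Q
  let e : Q ⟶ J := Injective.ι Q
  have hVmono : Mono V.f := V.mono
  -- The target object `W = [V.A ⟶ I ⟶ J]`.
  have hw : (V.f ≫ u) ≫ (pushout.inr V.g u ≫ e) = 0 := by
    rw [Category.assoc, ← Category.assoc u, ← pushout.condition]
    simp only [← Category.assoc]
    rw [V.w, zero_comp, zero_comp]
  -- `V.f ≫ u` is a kernel of `pushout.inr V.g u ≫ e`.
  have hkl : IsLimit (KernelFork.ofι (V.f ≫ u) hw) := by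
    refine KernelFork.IsLimit.ofι' _ _ (fun {X} k hk => ?_)
    have hk' : k ≫ pushout.inr V.g u = 0 := by
      have := hk
      rw [← Category.assoc] at this
      exact zero_of_comp_mono e this
    obtain ⟨p, hp1, hp2⟩ := ARHeart.pushout_lift_aux V.g u (0 : X ⟶ V.Z) k
      (by rw [zero_comp, hk'])
    obtain ⟨q, hq⟩ := KernelFork.IsLimit.lift' V.exact.fIsKernel p (by rw [hp1])
    exact ⟨q, by simp only [Fork.ι_ofι] at hq; rw [← Category.assoc, hq, hp2]⟩
  let W : ARHeart.Obj C :=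
    { A := V.A, B := I, Z := J
      f := V.f ≫ u
      g := pushout.inr V.g u ≫ e
      w := hw
      mono := mono_comp _ _
      exact := ShortComplex.exact_of_f_is_kernel _ hkl }
  -- The chain map `m : V ⟶ W`.
  let m : ARHeart.Hom V W :=
    { a := 𝟙 V.A
      b := u
      c := pushout.inl V.g u ≫ e
      comm₁ := by simp [W]
      comm₂ := by
        show V.g ≫ pushout.inl V.g u ≫ e = u ≫ pushout.inr V.g u ≫ e
        rw [← Category.assoc, ← Category.assoc, pushout.condition] }
  refine ⟨W, ARHeart.mkHom m, inferInstanceAs (Injective (Injective.under V.B)),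
    inferInstanceAs (Injective (Injective.under Q)), ?_⟩
  refine Preadditive.mono_of_cancel_zero _ ?_
  intro U φq hφ
  obtain ⟨φ, rfl⟩ := ARHeart.mkHom_surjective φq
  rw [mkHom_comp] at hφ
  have hnull : φ.comp m ∈ nullHomotopic U W :=
    (QuotientAddGroup.eq_zero_iff _).mp hφ
  obtain ⟨s₁, s₀, h1, h2, h3⟩ := hnull
  simp only [Hom.comp_a, Hom.comp_b, Hom.comp_c] at h1 h2 h3
  -- From `h3`, cancel `e` to get a pullback-type relation.
  have h3' : φ.c ≫ pushout.inl V.g u = s₀ ≫ pushout.inr V.g u := by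
    have : (φ.c ≫ pushout.inl V.g u) ≫ e = (s₀ ≫ pushout.inr V.g u) ≫ e := by
      simpa [Category.assoc] using h3
    exact (cancel_mono e).mp this
  obtain ⟨t, ht1, ht2⟩ := ARHeart.pushout_lift_aux V.g u φ.c s₀ h3'
  have hφnull : φ ∈ nullHomotopic U V := by
    refine ⟨s₁, t, ?_, ?_, ?_⟩
    · simpa [m] using h1
    · have : (φ.b) ≫ u = (U.g ≫ t + s₁ ≫ V.f) ≫ u := by
        rw [h2]
        simp only [Preadditive.add_comp, Category.assoc, ht2]
        rfl
      exact (cancel_mono u).mp this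
    · exact ht1.symm
  exact (QuotientAddGroup.eq_zero_iff _).mpr hφnull
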